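/- (Corollary 3.3, second part.) Assume P_x(τ_∂ < ∞) = 1 for every x ∈ χ, let λ₀ ∈ (0,1) be the spectral radius of K, assume every state is accessible from μ (for every x ∈ χ there exists t ∈ ℕ with (μK^t)(x) > 0), and assume that the conditional distributions converge to a quasi-limiting distribution π: for every y ∈ χ, (μK^t)(y)/P_μ(τ_∂>t) → π(y) as t → ∞. For p ∈ (0,1] let Z^p be the unique solution in [1,∞) of z = p·Σ_{s=0}^{∞} P_μ(τ_∂>s)·(1 − (1−p)/z)^{−(s+1)}, set c_p := (1 − (1−p)/Z^p)^{−1}, and define the probability measure π_p(y) := (p/Z^p)·Σ_{t=0}^{∞} c_p^{t+1}·(μK^t)(y). Then for every y ∈ χ, π_p(y) → π(y) as p → 0⁺. -/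

import Mathlib

open Finset Filter

/-- `muK K μ t y = (μ K^t)(y) = P_μ(X_t = y, τ_∂ > t)`. -/
noncomputable def muK {χ : Type*} [Fintype χ] [DecidableEq χ]
    (K : Matrix χ χ ℝ) (μ : χ → ℝ) (t : ℕ) (y : χ) : ℝ :=
  ∑ x, μ x * (K ^ t) x y

/-- The survival probability `P_μ(τ_∂ > t) = ∑_y (μ K^t)(y)`. -/
noncomputable def survM {χ : Type*} [Fintype χ] [DecidableEq χ]
    (K : Matrix χ χ ℝ) (μ : χ → ℝ) (t : ℕ) : ℝ :=
  ∑ y, muK K μ t y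

/-- `l` is the spectral radius of the real matrix `K`: the maximum modulus of its
complex eigenvalues. -/
def IsSpectralRadius {χ : Type*} [Fintype χ] [DecidableEq χ]
    (K : Matrix χ χ ℝ) (l : ℝ) : Prop :=
  (∀ z ∈ spectrum ℂ (K.map Complex.ofReal), ‖z‖ ≤ l) ∧
  (∃ z ∈ spectrum ℂ (K.map Complex.ofReal), ‖z‖ = l)

section
variable {χ : Type*} [Fintype χ] [DecidableEq χ]
variable (K : Matrix χ χ ℝ) (μ : χ → ℝ)

lemma pow_entry_nonneg (hK0 : ∀ x y, 0 ≤ K x y) : ∀ t x y, 0 ≤ (K ^ t) x y := by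
  intro t
  induction t with
  | zero => intro x y; simp [Matrix.one_apply]; positivity
  | succ t ih =>
    intro x y
    rw [pow_succ, Matrix.mul_apply]
    exact Finset.sum_nonneg fun z _ => mul_nonneg (ih x z) (hK0 z y)

lemma pow_rowsum_le (hK0 : ∀ x y, 0 ≤ K x y) (hK1 : ∀ x, ∑ y, K x y ≤ 1) :
    ∀ t x, ∑ y, (K ^ t) x y ≤ 1 := by
  intro t
  induction t with
  | zero => intro x; simp [Matrix.one_apply]
  | succ t ih =>
    intro x
    have : ∑ y, (K ^ (t+1)) x y = ∑ z, (K ^ t) x z * ∑ y, K z y := by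
      simp_rw [pow_succ, Matrix.mul_apply, Finset.mul_sum]
      rw [Finset.sum_comm]
    rw [this]
    calc ∑ z, (K ^ t) x z * ∑ y, K z y ≤ ∑ z, (K ^ t) x z * 1 := by
          refine Finset.sum_le_sum fun z _ => ?_
          exact mul_le_mul_of_nonneg_left (hK1 z) (pow_entry_nonneg K hK0 t x z)
      _ ≤ 1 := by simpa using ih x

lemma muK_nonneg (hK0 : ∀ x y, 0 ≤ K x y) (hμ0 : ∀ x, 0 ≤ μ x) (t : ℕ) (y : χ) :
    0 ≤ muK K μ t y :=
  Finset.sum_nonneg fun x _ => mul_nonneg (hμ0 x) (pow_entry_nonneg K hK0 t x y)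

lemma muK_add (s t : ℕ) (y : χ) : muK K μ (s + t) y = ∑ x, muK K μ s x * (K ^ t) x y := by
  unfold muK
  simp_rw [pow_add, Matrix.mul_apply, Finset.mul_sum, Finset.sum_mul]
  rw [Finset.sum_comm]
  exact Finset.sum_congr rfl fun x _ => Finset.sum_congr rfl fun z _ => by ring

lemma muK_le_surv (hK0 : ∀ x y, 0 ≤ K x y) (hμ0 : ∀ x, 0 ≤ μ x) (t : ℕ) (y : χ) :
    muK K μ t y ≤ survM K μ t :=
  Finset.single_le_sum (fun z _ => muK_nonneg K μ hK0 hμ0 t z) (Finset.mem_univ y)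

lemma survM_zero (hμ1 : ∑ x, μ x = 1) : survM K μ 0 = 1 := by
  unfold survM muK
  simp_rw [pow_zero, Matrix.one_apply, mul_ite, mul_one, mul_zero]
  simp [hμ1]

lemma survM_antitone (hK0 : ∀ x y, 0 ≤ K x y) (hK1 : ∀ x, ∑ y, K x y ≤ 1)
    (hμ0 : ∀ x, 0 ≤ μ x) : Antitone (survM K μ) := by
  refine antitone_nat_of_succ_le fun t => ?_
  unfold survM
  have h1 : ∑ y, muK K μ (t+1) y = ∑ x, muK K μ t x * ∑ y, K x y := by
    have : ∀ y, muK K μ (t+1) y = ∑ x, muK K μ t x * K x y := fun y => muK_add K μ t 1 y ▸ by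
      simp [muK_add K μ t 1 y, pow_one]
    simp_rw [this, Finset.mul_sum]
    rw [Finset.sum_comm]
  rw [h1]
  refine Finset.sum_le_sum fun x _ => ?_
  have := muK_nonneg K μ hK0 hμ0 t x
  nlinarith [hK1 x]

lemma survM_le_one (hK0 : ∀ x y, 0 ≤ K x y) (hK1 : ∀ x, ∑ y, K x y ≤ 1)
    (hμ0 : ∀ x, 0 ≤ μ x) (hμ1 : ∑ x, μ x = 1) (t : ℕ) : survM K μ t ≤ 1 := by
  have := survM_antitone K μ hK0 hK1 hμ0 (Nat.zero_le t)
  rwa [survM_zero K μ hμ1] at this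

end

section
variable {χ : Type*} [Fintype χ] [DecidableEq χ]

lemma exists_eigvec {n : Type*} [Fintype n] [DecidableEq n] (M : Matrix n n ℂ) {z : ℂ}
    (hz : z ∈ spectrum ℂ M) : ∃ v : n → ℂ, v ≠ 0 ∧ M.mulVec v = z • v := by
  rw [← AlgEquiv.spectrum_eq (Matrix.toLinAlgEquiv' : Matrix n n ℂ ≃ₐ[ℂ] _)] at hz
  have he := Module.End.hasEigenvalue_iff_mem_spectrum.mpr hz
  obtain ⟨v, hv⟩ := he.exists_hasEigenvector
  refine ⟨v, hv.2, ?_⟩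
  have := hv.apply_eq_smul
  rwa [show (Matrix.toLinAlgEquiv' M : (n → ℂ) →ₗ[ℂ] (n → ℂ)) = Matrix.toLin' M from rfl,
    Matrix.toLin'_apply] at this

lemma surv_lower_bound (K : Matrix χ χ ℝ) (hK0 : ∀ x y, 0 ≤ K x y)
    (hK1 : ∀ x, ∑ y, K x y ≤ 1) (μ : χ → ℝ) (hμ0 : ∀ x, 0 ≤ μ x)
    (lam : ℝ) (hlam0 : 0 < lam) (hspec : IsSpectralRadius K lam)
    (hacc : ∀ x : χ, ∃ t : ℕ, 0 < muK K μ t x) :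
    ∃ a : ℝ, 0 < a ∧ ∀ s : ℕ, a * lam ^ s ≤ survM K μ s := by
  obtain ⟨z, hz, habs⟩ := hspec.2
  obtain ⟨v, hv0, hvz⟩ := exists_eigvec _ hz
  -- powers
  have hMv : ∀ s : ℕ, ((K.map Complex.ofReal) ^ s).mulVec v = z ^ s • v := by
    intro s
    induction s with
    | zero => simp
    | succ s ih =>
      rw [pow_succ, ← Matrix.mulVec_mulVec, hvz, Matrix.mulVec_smul, ih, smul_smul,
        pow_succ]
      ring_nf
  have hpow : ∀ s : ℕ, ((K ^ s).map Complex.ofReal).mulVec v = z ^ s • v := by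
    intro s
    have hmap : (K ^ s).map Complex.ofReal = (K.map Complex.ofReal) ^ s := by
      have := map_pow (Complex.ofRealHom.mapMatrix : Matrix χ χ ℝ →+* Matrix χ χ ℂ) K s
      simp only [RingHom.mapMatrix_apply] at this
      exact this
    rw [hmap]; exact hMv s
  -- pick maximizing coordinate
  have hne : (Finset.univ : Finset χ).Nonempty := by
    obtain ⟨j, hj⟩ := Function.ne_iff.mp hv0
    exact ⟨j, Finset.mem_univ j⟩
  obtain ⟨i, -, hi⟩ := Finset.exists_max_image Finset.univ (fun j => ‖v j‖) hne
  have hvi : 0 < ‖v i‖ := by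
    obtain ⟨j, hj⟩ := Function.ne_iff.mp hv0
    exact lt_of_lt_of_le (by simpa using hj) (hi j (Finset.mem_univ j))
  -- lam^s ≤ row sum at i
  have hrow : ∀ s : ℕ, lam ^ s ≤ ∑ y, (K ^ s) i y := by
    intro s
    have h1 : ∑ j, ((K ^ s) i j : ℂ) * v j = z ^ s * v i := by
      have := congrFun (hpow s) i
      simpa [Matrix.mulVec, dotProduct, Matrix.map_apply] using this
    have h2 : lam ^ s * ‖v i‖ ≤ (∑ y, (K ^ s) i y) * ‖v i‖ := by
      calc lam ^ s * ‖v i‖ = ‖z ^ s * v i‖ := by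
            rw [norm_mul, norm_pow, habs]
        _ = ‖∑ j, ((K ^ s) i j : ℂ) * v j‖ := by rw [h1]
        _ ≤ ∑ j, ‖((K ^ s) i j : ℂ) * v j‖ := norm_sum_le _ _
        _ ≤ ∑ j, (K ^ s) i j * ‖v i‖ := by
            refine Finset.sum_le_sum fun j _ => ?_
            rw [norm_mul, Complex.norm_real, Real.norm_eq_abs, abs_of_nonneg (pow_entry_nonneg K hK0 s i j)]
            exact mul_le_mul_of_nonneg_left (hi j (Finset.mem_univ j))
              (pow_entry_nonneg K hK0 s i j)
        _ = (∑ y, (K ^ s) i y) * ‖v i‖ := by rw [Finset.sum_mul]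
    exact le_of_mul_le_mul_right h2 hvi
  obtain ⟨ti, hti⟩ := hacc i
  refine ⟨muK K μ ti i, hti, fun s => ?_⟩
  have h3 : muK K μ ti i * ∑ y, (K ^ s) i y ≤ survM K μ (ti + s) := by
    rw [Finset.mul_sum]
    unfold survM
    refine Finset.sum_le_sum fun y _ => ?_
    rw [muK_add]
    exact Finset.single_le_sum
      (fun x _ => mul_nonneg (muK_nonneg K μ hK0 hμ0 ti x) (pow_entry_nonneg K hK0 s x y))
      (Finset.mem_univ i)
  calc muK K μ ti i * lam ^ s ≤ muK K μ ti i * ∑ y, (K ^ s) i y :=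
        mul_le_mul_of_nonneg_left (hrow s) hti.le
    _ ≤ survM K μ (ti + s) := h3
    _ ≤ survM K μ s := survM_antitone K μ hK0 hK1 hμ0 (Nat.le_add_left s ti)

end

/-- Corollary 3.3, second part: suppose killing is a.s., `λ₀ ∈ (0,1)` is the spectral
radius of `K`, every state is accessible from `μ`, and the conditional distributions
converge to a quasi-limiting distribution `π`:
`(μK^t)(y)/P_μ(τ_∂>t) → π(y)` for every `y`. For `p ∈ (0,1]` let `Z^p = Zsel p` be the
unique solution in `[1,∞)` of the infinite-horizon fixed point equation, let
`c_p = (1 − (1−p)/Z^p)⁻¹` and `π_p(y) = (p/Z^p)·∑_{t=0}^{∞} c_p^{t+1}·(μK^t)(y)`.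
Then `π_p(y) → π(y)` as `p → 0⁺`. -/
theorem pi_p_tendsto_quasi_limiting_distribution
    {χ : Type*} [Fintype χ] [Nonempty χ] [DecidableEq χ]
    (K : Matrix χ χ ℝ) (hK0 : ∀ x y, 0 ≤ K x y) (hK1 : ∀ x, ∑ y, K x y ≤ 1)
    (μ : χ → ℝ) (hμ0 : ∀ x, 0 ≤ μ x) (hμ1 : ∑ x, μ x = 1)
    (hkill : ∀ x : χ, Filter.Tendsto (fun t => ∑ y, (K ^ t) x y) Filter.atTop (nhds 0))
    (lam : ℝ) (hlam0 : 0 < lam) (hlam1 : lam < 1) (hspec : IsSpectralRadius K lam)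
    (hacc : ∀ x : χ, ∃ t : ℕ, 0 < muK K μ t x)
    (π : χ → ℝ)
    (hql : ∀ y : χ, Filter.Tendsto (fun t => muK K μ t y / survM K μ t)
      Filter.atTop (nhds (π y)))
    (Zsel : ℝ → ℝ)
    (hZsel : ∀ p ∈ Set.Ioc (0 : ℝ) 1,
      1 ≤ Zsel p ∧
      Summable (fun s : ℕ => survM K μ s * ((1 - (1 - p) / Zsel p)⁻¹) ^ (s + 1)) ∧
      Zsel p = p * ∑' s : ℕ, survM K μ s * ((1 - (1 - p) / Zsel p)⁻¹) ^ (s + 1)) :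
    ∀ y : χ,
      Filter.Tendsto
        (fun p : ℝ =>
          (p / Zsel p) * ∑' t : ℕ, ((1 - (1 - p) / Zsel p)⁻¹) ^ (t + 1) * muK K μ t y)
        (nhdsWithin 0 (Set.Ioc (0 : ℝ) 1)) (nhds (π y)) := by
  intro y
  obtain ⟨a, ha0, hlb⟩ := surv_lower_bound K hK0 hK1 μ hμ0 lam hlam0 hspec hacc
  have hsurvpos : ∀ t, 0 < survM K μ t := fun t =>
    lt_of_lt_of_le (mul_pos ha0 (pow_pos hlam0 t)) (hlb t)
  have hsurv1 : ∀ t, survM K μ t ≤ 1 := survM_le_one K μ hK0 hK1 hμ0 hμ1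
  set r : ℕ → ℝ := fun t => muK K μ t y / survM K μ t with hrdef
  have hr0 : ∀ t, 0 ≤ r t := fun t =>
    div_nonneg (muK_nonneg K μ hK0 hμ0 t y) (hsurvpos t).le
  have hr1 : ∀ t, r t ≤ 1 := fun t =>
    (div_le_one (hsurvpos t)).mpr (muK_le_surv K μ hK0 hμ0 t y)
  have hπ0 : 0 ≤ π y := ge_of_tendsto' (hql y) hr0
  have hπ1 : π y ≤ 1 := le_of_tendsto' (hql y) hr1
  have habs1 : ∀ t, |r t - π y| ≤ 1 := fun t =>
    abs_le.mpr ⟨by linarith [hr0 t], by linarith [hr1 t]⟩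
  rw [Metric.tendsto_nhdsWithin_nhds]
  intro ε hε
  obtain ⟨T, hT⟩ := (Metric.tendsto_atTop.mp (hql y)) (ε / 2) (by linarith)
  set C : ℝ := ∑ t ∈ Finset.range T, (lam⁻¹) ^ (t + 1) with hCdef
  have hC0 : 0 ≤ C := Finset.sum_nonneg fun t _ => pow_nonneg (inv_nonneg.mpr hlam0.le) _
  refine ⟨ε / (2 * (C + 1)), div_pos hε (by linarith), ?_⟩
  intro p hp hdist
  obtain ⟨hZ1, hsum, hZeq⟩ := hZsel p hp
  obtain ⟨hp0, hp1⟩ := hp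
  have hpδ : p < ε / (2 * (C + 1)) := by
    rwa [Real.dist_eq, sub_zero, abs_of_pos hp0] at hdist
  set Z : ℝ := Zsel p with hZdef
  set c : ℝ := (1 - (1 - p) / Z)⁻¹ with hcdef
  have hZ0 : (0 : ℝ) < Z := lt_of_lt_of_le one_pos hZ1
  have hdle : (1 - p) / Z ≤ 1 - p := div_le_self (by linarith) hZ1
  have hdpos : 0 < 1 - (1 - p) / Z := by linarith
  have hc0 : (0 : ℝ) < c := inv_pos.mpr hdpos
  -- c ≤ lam⁻¹ from summability
  have hcl : lam * c ≤ 1 := by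
    by_contra h
    push_neg at h
    have hlow : ∀ s : ℕ, a * c ≤ survM K μ s * c ^ (s + 1) := by
      intro s
      have h1 : (1 : ℝ) ≤ (lam * c) ^ s := one_le_pow₀ h.le
      have h2 : a * c * (lam * c) ^ s ≤ survM K μ s * c ^ (s + 1) := by
        have he : a * c * (lam * c) ^ s = (a * lam ^ s) * c ^ (s + 1) := by
          rw [mul_pow, pow_succ]; ring
        rw [he]
        exact mul_le_mul_of_nonneg_right (hlb s) (pow_nonneg hc0.le _)
      nlinarith [mul_le_mul_of_nonneg_left h1 (mul_pos ha0 hc0).le]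
    have hev := (hsum.tendsto_atTop_zero).eventually_lt_const (mul_pos ha0 hc0)
    obtain ⟨s, hs⟩ := hev.exists
    exact absurd (hlow s) (not_le.mpr hs)
  have hclam : c ≤ lam⁻¹ := by
    rw [← one_div]
    exact (le_div_iff₀ hlam0).mpr (by linarith [hcl])
  -- weights
  set w : ℕ → ℝ := fun t => (p / Z) * (survM K μ t * c ^ (t + 1)) with hwdef
  have hw0 : ∀ t, 0 ≤ w t := fun t =>
    mul_nonneg (div_nonneg hp0.le hZ0.le)
      (mul_nonneg (hsurvpos t).le (pow_nonneg hc0.le _))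
  have hwsum : Summable w := hsum.mul_left _
  have htot : ∑' t, w t = 1 := by
    simp only [hwdef]
    rw [tsum_mul_left, div_mul_eq_mul_div, ← hZeq, div_self hZ0.ne']
  have hw_le : ∀ t, w t ≤ p * lam⁻¹ ^ (t + 1) := by
    intro t
    have h1 : survM K μ t * c ^ (t + 1) ≤ 1 * lam⁻¹ ^ (t + 1) := by
      refine mul_le_mul (hsurv1 t) (pow_le_pow_left₀ hc0.le hclam _)
        (pow_nonneg hc0.le _) one_pos.le
    have h2 : p / Z ≤ p := div_le_self hp0.le hZ1
    calc w t ≤ p * (survM K μ t * c ^ (t + 1)) :=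
          mul_le_mul_of_nonneg_right h2
            (mul_nonneg (hsurvpos t).le (pow_nonneg hc0.le _))
      _ ≤ p * (1 * lam⁻¹ ^ (t + 1)) := mul_le_mul_of_nonneg_left h1 hp0.le
      _ = p * lam⁻¹ ^ (t + 1) := by ring
  -- summability of all the pieces
  set g : ℕ → ℝ := fun t => w t * |r t - π y| with hgdef
  have hge : ∀ t, g t = w t * |r t - π y| := fun t => rfl
  have hg0 : ∀ t, 0 ≤ g t := fun t => mul_nonneg (hw0 t) (abs_nonneg _)
  have hg_le_w : ∀ t, g t ≤ w t := fun t => by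
    simpa using mul_le_mul_of_nonneg_left (habs1 t) (hw0 t)
  have hg : Summable g := Summable.of_nonneg_of_le hg0 hg_le_w hwsum
  have hwr : ∀ t, w t * r t = (p / Z) * (c ^ (t + 1) * muK K μ t y) := by
    intro t
    simp only [hwdef, hrdef]
    calc (p / Z) * (survM K μ t * c ^ (t + 1)) * (muK K μ t y / survM K μ t)
        = (p / Z) * (c ^ (t + 1) * muK K μ t y) * (survM K μ t / survM K μ t) := by
          ring
      _ = (p / Z) * (c ^ (t + 1) * muK K μ t y) := by
          rw [div_self (hsurvpos t).ne', mul_one]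
  have hwr0 : ∀ t, 0 ≤ w t * r t := fun t => mul_nonneg (hw0 t) (hr0 t)
  have hwr_le : ∀ t, w t * r t ≤ w t := fun t => by
    simpa using mul_le_mul_of_nonneg_left (hr1 t) (hw0 t)
  have hwrsum : Summable (fun t => w t * r t) := Summable.of_nonneg_of_le hwr0 hwr_le hwsum
  -- main identity
  have hfp : (p / Z) * ∑' t : ℕ, c ^ (t + 1) * muK K μ t y = ∑' t, w t * r t := by
    rw [← tsum_mul_left]
    exact tsum_congr fun t => (hwr t).symm
  have hπsum : Summable (fun t => w t * π y) := hwsum.mul_right _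
  have hπeq : ∑' t, w t * π y = π y := by
    rw [tsum_mul_right, htot, one_mul]
  have hdiff : ∑' t, w t * (r t - π y)
      = (p / Z) * (∑' t : ℕ, c ^ (t + 1) * muK K μ t y) - π y := by
    calc ∑' t, w t * (r t - π y)
        = ∑' t, (w t * r t - w t * π y) := tsum_congr fun t => by ring
      _ = (∑' t, w t * r t) - ∑' t, w t * π y := Summable.tsum_sub hwrsum hπsum
      _ = (p / Z) * (∑' t : ℕ, c ^ (t + 1) * muK K μ t y) - π y := by rw [hfp, hπeq]
  -- bound
  have hnorm : ∀ t, ‖w t * (r t - π y)‖ = g t := by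
    intro t
    rw [Real.norm_eq_abs, abs_mul, abs_of_nonneg (hw0 t)]
  have hgnorm : Summable (fun t => ‖w t * (r t - π y)‖) := by
    simp only [hnorm]; exact hg
  have hbound1 : |∑' t, w t * (r t - π y)| ≤ ∑' t, g t := by
    have h := norm_tsum_le_tsum_norm hgnorm
    rw [Real.norm_eq_abs] at h
    calc |∑' t, w t * (r t - π y)| ≤ ∑' t, ‖w t * (r t - π y)‖ := h
      _ = ∑' t, g t := tsum_congr hnorm
  -- split the sum at T
  have hgtail : Summable fun i : ℕ => g (i + T) := (summable_nat_add_iff T).mpr hg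
  have hwtail : Summable fun i : ℕ => w (i + T) := (summable_nat_add_iff T).mpr hwsum
  have hsplit := Summable.sum_add_tsum_nat_add' (f := g) (k := T) hgtail
  have hwsplit := Summable.sum_add_tsum_nat_add' (f := w) (k := T) hwtail
  have htail_w : ∑' i : ℕ, w (i + T) ≤ 1 := by
    have hhead : 0 ≤ ∑ i ∈ Finset.range T, w i := Finset.sum_nonneg fun i _ => hw0 i
    rw [htot] at hwsplit
    linarith
  have htail : ∑' i : ℕ, g (i + T) ≤ ε / 2 := by
    have h1 : ∀ i : ℕ, g (i + T) ≤ w (i + T) * (ε / 2) := by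
      intro i
      have := hT (i + T) (Nat.le_add_left T i)
      rw [Real.dist_eq] at this
      exact mul_le_mul_of_nonneg_left this.le (hw0 _)
    calc ∑' i : ℕ, g (i + T) ≤ ∑' i : ℕ, w (i + T) * (ε / 2) :=
          Summable.tsum_le_tsum h1 hgtail (hwtail.mul_right _)
      _ = (∑' i : ℕ, w (i + T)) * (ε / 2) := tsum_mul_right
      _ ≤ 1 * (ε / 2) := mul_le_mul_of_nonneg_right htail_w (by linarith)
      _ = ε / 2 := one_mul _
  have hhead : ∑ i ∈ Finset.range T, g i < ε / 2 := by
    have h1 : ∑ i ∈ Finset.range T, g i ≤ ∑ i ∈ Finset.range T, p * lam⁻¹ ^ (i + 1) :=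
      Finset.sum_le_sum fun i _ => le_trans (hg_le_w i) (hw_le i)
    have h2 : ∑ i ∈ Finset.range T, p * lam⁻¹ ^ (i + 1) = p * C := by
      rw [hCdef, Finset.mul_sum]
    have h3 : p * C < ε / 2 := by
      have h4 : p * (C + 1) < ε / (2 * (C + 1)) * (C + 1) :=
        mul_lt_mul_of_pos_right hpδ (by linarith)
      have h5 : ε / (2 * (C + 1)) * (C + 1) = ε / 2 := by field_simp
      nlinarith
    linarith
  -- conclude
  rw [Real.dist_eq, ← hdiff]
  calc |∑' t, w t * (r t - π y)| ≤ ∑' t, g t := hbound1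
    _ = ∑ i ∈ Finset.range T, g i + ∑' i : ℕ, g (i + T) := hsplit.symm
    _ < ε / 2 + ε / 2 := by
        have := add_lt_add_of_lt_of_le hhead htail
        linarith
    _ = ε := by ring
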